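/- For a type-β 3-spiral representative P (i.e. for all i ≥ N: (Pᵢ,Pᵢ₊₁,Pᵢ₊₂) and (Pᵢ,Pᵢ₊₁,Pᵢ₊₃) positively oriented and Pᵢ₊₄ ∈ int(Pᵢ,Pᵢ₊₁,Pᵢ₊₃)), for all i > N the quadrilateral (Pᵢ, Pᵢ₊₁, Pᵢ₊₂, Pᵢ₊₃) is convex, meaning all four triples (Pᵢ,Pᵢ₊₁,Pᵢ₊₂), (Pᵢ₊₁,Pᵢ₊₂,Pᵢ₊₃), (Pᵢ₊₂,Pᵢ₊₃,Pᵢ), (Pᵢ₊₃,Pᵢ,Pᵢ₊₁) are positively oriented. -/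

import Mathlib

def det2 (u v : ℝ × ℝ) : ℝ := u.1 * v.2 - u.2 * v.1

def ori (A B C : ℝ × ℝ) : ℝ := det2 (B - A) (C - B)

def inTriangle (A B C W : ℝ × ℝ) : Prop :=
  ∃ l₁ l₂ l₃ : ℝ, l₁ ∈ Set.Ioo (0:ℝ) 1 ∧ l₂ ∈ Set.Ioo (0:ℝ) 1 ∧
    l₃ ∈ Set.Ioo (0:ℝ) 1 ∧ l₁ + l₂ + l₃ = 1 ∧ W = l₁ • A + l₂ • B + l₃ • C

/-!
Two of the four orientations are hypotheses at the indices `i` and `i + 1`, and a third is a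
cyclic rotation of one of them. For the remaining one, `P (i+3)` lies inside the positively
oriented triangle `(P (i-1), P i, P (i+2))`, so it lies strictly on the positive side of the
line through `P (i+2)` and `P i`.
-/

lemma ori_rotate (A B C : ℝ × ℝ) : ori A B C = ori B C A := by
  simp only [ori, det2, Prod.fst_sub, Prod.snd_sub]
  ring

lemma ori_affineCombination (A B C : ℝ × ℝ) {l₁ l₂ l₃ : ℝ} (hsum : l₁ + l₂ + l₃ = 1) :
    ori C (l₁ • A + l₂ • B + l₃ • C) B = l₁ * ori A B C := by
  obtain rfl : l₃ = 1 - l₁ - l₂ := by linarith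
  simp only [ori, det2, Prod.fst_sub, Prod.snd_sub, Prod.fst_add, Prod.snd_add,
    Prod.smul_fst, Prod.smul_snd, smul_eq_mul]
  ring

lemma ori_pos_of_inTriangle {A B C W : ℝ × ℝ} (hW : inTriangle A B C W)
    (hABC : 0 < ori A B C) : 0 < ori C W B := by
  obtain ⟨l₁, l₂, l₃, hl₁, -, -, hsum, rfl⟩ := hW
  rw [ori_affineCombination A B C hsum]
  exact mul_pos hl₁.1 hABC

theorem stmt12 (P : ℤ → ℝ × ℝ) (N : ℤ)
    (hspiral : ∀ i ≥ N, 0 < ori (P i) (P (i+1)) (P (i+2)) ∧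
      0 < ori (P i) (P (i+1)) (P (i+3)) ∧
      inTriangle (P i) (P (i+1)) (P (i+3)) (P (i+4))) :
    ∀ i > N, 0 < ori (P i) (P (i+1)) (P (i+2)) ∧
      0 < ori (P (i+1)) (P (i+2)) (P (i+3)) ∧
      0 < ori (P (i+2)) (P (i+3)) (P i) ∧
      0 < ori (P (i+3)) (P i) (P (i+1)) := by
  intro i hi
  have hprev := hspiral (i - 1) (by omega)
  have hcur := hspiral i hi.le
  have hnext := hspiral (i + 1) (by omega)
  rw [sub_add_cancel, show i - 1 + 3 = i + 2 by ring, show i - 1 + 4 = i + 3 by ring] at hprev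
  rw [show i + 1 + 1 = i + 2 by ring, show i + 1 + 2 = i + 3 by ring] at hnext
  refine ⟨hcur.1, hnext.1, ori_pos_of_inTriangle hprev.2.2 hprev.2.1, ?_⟩
  rw [ori_rotate]
  exact hcur.2.1
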